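/- arXiv:1003.3440 — 3 statements merged into one kernel-verified Lean document; each statement's English description precedes it below -/
import Mathlib

section
/- Let c ∈ ℝ, r > 0 and t₀ ∈ ℝ with t₀ − r + c > 0, and let τ : [t₀, ∞) → [0, r] be a continuous function such that t + c − τ(t) > 0 for all t ≥ t₀. Then for every continuous function x : [t₀−r, ∞) → ℝ that is differentiable on [t₀, ∞) and satisfies x'(t) = x(t−τ(t))/(t + c − τ(t)) for t ≥ t₀, the limit lim_{t→∞} x(t)/(t + c) exists, and the derivative of t ↦ x(t)/(t + c) tends to 0 as t → ∞. -/
/-!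
Put `y(t) = x(t)/(t + c)`. Since `t ↦ K (t + c)` solves the equation and the equation is linear,
a first-crossing argument shows that a bound `m - K ≤ y ≤ m + K` on a window of length `r`
persists for all later times. Taking the initial window makes `y` bounded, say by `B`; then
`y' = (y(t - τ(t)) - y(t))/(t + c)` is `O(1/t)`, so on the window `[b, b + r]` the function `y`
stays within `2Br/(b + c)` of `y(b)`, hence within that distance for all times after `b`.
Thus `y` is Cauchy at infinity, and `y' → 0`.
-/

open Filter Topology Set

theorem exists_tendsto_of_eventually_dist_le {α β : Type*} [MetricSpace α] [CompleteSpace α]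
    [Nonempty β] [SemilatticeSup β] {f : β → α} {g : β → ℝ} (hg : Tendsto g atTop (𝓝 0))
    (h : ∀ᶠ b in atTop, ∀ s, b ≤ s → dist (f s) (f b) ≤ g b) :
    ∃ L, Tendsto f atTop (𝓝 L) :=
  cauchySeq_tendsto_of_complete <| Metric.cauchySeq_iff'.2 fun _ hε =>
    (h.and (hg.eventually (gt_mem_nhds hε))).exists.imp fun _ hN s hs =>
      (hN.1 s hs).trans_lt hN.2

section Comparison

variable {r a : ℝ} {τ z z' : ℝ → ℝ}

theorem nonneg_of_forall_mem_Icc {t₀ : ℝ} (hτ : ∀ t, t₀ < t → τ t ∈ Icc 0 r) : 0 ≤ r :=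
  nonempty_Icc.1 ⟨_, hτ (t₀ + 1) (lt_add_one t₀)⟩

theorem antitoneOn_Icc_of_neg_on_Ico
    (hτ : ∀ t, a + r < t → τ t ∈ Icc 0 r) (hzc : ContinuousOn z (Ici (a + r)))
    (hz : ∀ t, a + r < t → HasDerivAt z (z' t) t)
    (hz' : ∀ t, a + r < t → z (t - τ t) < 0 → z' t ≤ 0)
    {b : ℝ} (hneg : ∀ u ∈ Ico a b, z u < 0) :
    AntitoneOn z (Icc (a + r) b) := by
  refine antitoneOn_of_deriv_nonpos (convex_Icc _ _) (hzc.mono Icc_subset_Ici_self) ?_ ?_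
  all_goals rw [interior_Icc]
  · exact fun t ht => (hz t ht.1).differentiableAt.differentiableWithinAt
  · intro t ht
    rw [(hz t ht.1).deriv]
    have hτt := hτ t ht.1
    exact hz' t ht.1 (hneg _ ⟨by linarith [ht.1, hτt.2], by linarith [ht.2, hτt.1]⟩)

theorem forall_neg_of_neg_on_window
    (hτ : ∀ t, a + r < t → τ t ∈ Icc 0 r) (hzc : ContinuousOn z (Ici (a + r)))
    (hz : ∀ t, a + r < t → HasDerivAt z (z' t) t)
    (hz' : ∀ t, a + r < t → z (t - τ t) < 0 → z' t ≤ 0)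
    (hwin : ∀ s ∈ Icc a (a + r), z s < 0) :
    ∀ s, a ≤ s → z s < 0 := by
  intro t hat
  by_contra! hzt
  have hr := nonneg_of_forall_mem_Icc hτ
  have hz₀ : z (a + r) < 0 := hwin _ ⟨by linarith, le_rfl⟩
  have hat' : a + r < t := lt_of_not_ge fun h => (hwin t ⟨hat, h⟩).not_ge hzt
  -- `s` is the first time after `a + r` at which `z` is nonnegative
  set S := Icc (a + r) t ∩ z ⁻¹' Ici 0
  have hSc : IsClosed S :=
    (hzc.mono Icc_subset_Ici_self).preimage_isClosed_of_isClosed isClosed_Icc isClosed_Ici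
  have hSb : BddBelow S := ⟨a + r, fun u hu => hu.1.1⟩
  have hsS : sInf S ∈ S := hSc.csInf_mem ⟨t, ⟨hat'.le, le_rfl⟩, hzt⟩ hSb
  have hbefore : ∀ u ∈ Ico a (sInf S), z u < 0 := by
    intro u hu
    rcases le_or_gt u (a + r) with h | h
    · exact hwin u ⟨hu.1, h⟩
    · by_contra! hzu
      exact (csInf_le hSb ⟨⟨h.le, hu.2.le.trans hsS.1.2⟩, hzu⟩).not_gt hu.2
  have hanti := antitoneOn_Icc_of_neg_on_Ico hτ hzc hz hz' hbefore
  have : z (sInf S) ≤ z (a + r) := hanti ⟨le_rfl, hsS.1.1⟩ ⟨hsS.1.1, le_rfl⟩ hsS.1.1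
  exact (lt_of_le_of_lt this hz₀).not_ge hsS.2

end Comparison

namespace DelayEquation

structure IsSolution (c r t₀ : ℝ) (τ x : ℝ → ℝ) : Prop where
  continuousOn : ContinuousOn x (Ici (t₀ - r))
  hasDerivAt : ∀ t, t₀ < t → HasDerivAt x (x (t - τ t) / (t + c - τ t)) t

noncomputable def ratio (c : ℝ) (x : ℝ → ℝ) (t : ℝ) : ℝ := x t / (t + c)

variable {c r t₀ : ℝ} {τ x y : ℝ → ℝ}

theorem IsSolution.sub (hx : IsSolution c r t₀ τ x) (hy : IsSolution c r t₀ τ y) :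
    IsSolution c r t₀ τ (x - y) where
  continuousOn := hx.continuousOn.sub hy.continuousOn
  hasDerivAt t ht := by
    simpa only [Pi.sub_apply, sub_div] using (hx.hasDerivAt t ht).sub (hy.hasDerivAt t ht)

theorem IsSolution.neg (hx : IsSolution c r t₀ τ x) : IsSolution c r t₀ τ (-x) where
  continuousOn := hx.continuousOn.neg
  hasDerivAt t ht := by
    simpa only [Pi.neg_apply, neg_div] using (hx.hasDerivAt t ht).neg

theorem add_pos_of_ge (hc : 0 < t₀ - r + c) {s : ℝ} (hs : t₀ - r ≤ s) : 0 < s + c := by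
  linarith

theorem delay_add_pos (hτ : ∀ t, t₀ < t → τ t ∈ Icc 0 r) (hc : 0 < t₀ - r + c)
    {t : ℝ} (ht : t₀ < t) : 0 < t - τ t + c :=
  add_pos_of_ge hc (by linarith [(hτ t ht).2])

theorem isSolution_affine (hτ : ∀ t, t₀ < t → τ t ∈ Icc 0 r) (hc : 0 < t₀ - r + c) (K : ℝ) :
    IsSolution c r t₀ τ (fun t => K * (t + c)) where
  continuousOn := by fun_prop
  hasDerivAt t ht := by
    have hd : t + c - τ t ≠ 0 := by linarith [delay_add_pos hτ hc ht]
    refine (((hasDerivAt_id' t).add_const c).const_mul K).congr_deriv ?_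
    rw [mul_one, eq_div_iff hd]
    ring

theorem IsSolution.ratio_le_of_le_on_window (hx : IsSolution c r t₀ τ x)
    (hτ : ∀ t, t₀ < t → τ t ∈ Icc 0 r) (hc : 0 < t₀ - r + c) {a K : ℝ} (ha : t₀ - r ≤ a)
    (hK : ∀ s ∈ Icc a (a + r), ratio c x s ≤ K) :
    ∀ s, a ≤ s → ratio c x s ≤ K := by
  have hr := nonneg_of_forall_mem_Icc hτ
  intro s hs
  refine le_of_forall_pos_lt_add fun ε hε => ?_
  have hz := hx.sub (isSolution_affine hτ hc (K + ε))
  set z := x - fun t => (K + ε) * (t + c)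
  have hlt : ∀ u, a ≤ u → (ratio c x u < K + ε ↔ z u < 0) := fun u hu => by
    simp only [ratio, z, Pi.sub_apply, sub_neg, div_lt_iff₀ (add_pos_of_ge hc (ha.trans hu))]
  refine (hlt s hs).2 <| forall_neg_of_neg_on_window (r := r) (τ := τ)
    (fun t ht => hτ t (by linarith)) (hz.continuousOn.mono (Ici_subset_Ici.2 (by linarith)))
    (fun t ht => hz.hasDerivAt t (by linarith)) (fun t ht hneg => ?_)
    (fun u hu => (hlt u hu.1).1 ((hK u hu).trans_lt (by linarith))) s hs
  have : 0 < t + c - τ t := by linarith [delay_add_pos hτ hc (t := t) (by linarith)]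
  exact div_nonpos_of_nonpos_of_nonneg hneg.le this.le

theorem IsSolution.abs_ratio_sub_le_of_window (hx : IsSolution c r t₀ τ x)
    (hτ : ∀ t, t₀ < t → τ t ∈ Icc 0 r) (hc : 0 < t₀ - r + c) {a m K : ℝ} (ha : t₀ - r ≤ a)
    (hK : ∀ s ∈ Icc a (a + r), |ratio c x s - m| ≤ K) :
    ∀ s, a ≤ s → |ratio c x s - m| ≤ K := by
  have hneg : ∀ s, ratio c (-x) s = -ratio c x s := fun s => neg_div _ _
  intro s hs
  rw [abs_sub_le_iff]
  constructor
  · refine sub_le_iff_le_add'.2 (hx.ratio_le_of_le_on_window hτ hc ha (fun u hu => ?_) s hs)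
    linarith [(abs_sub_le_iff.1 (hK u hu)).1]
  · have := hx.neg.ratio_le_of_le_on_window hτ hc ha (K := K - m) (fun u hu => ?_) s hs
    · linarith [hneg s]
    · linarith [hneg u, (abs_sub_le_iff.1 (hK u hu)).2]

theorem IsSolution.exists_bound (hx : IsSolution c r t₀ τ x)
    (hτ : ∀ t, t₀ < t → τ t ∈ Icc 0 r) (hc : 0 < t₀ - r + c) :
    ∃ B, ∀ s, t₀ - r ≤ s → |ratio c x s| ≤ B := by
  have hcont : ContinuousOn (ratio c x) (Icc (t₀ - r) (t₀ - r + r)) :=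
    (hx.continuousOn.mono Icc_subset_Ici_self).div (by fun_prop)
      fun s hs => (add_pos_of_ge hc hs.1).ne'
  obtain ⟨B, hB⟩ := isCompact_Icc.exists_bound_of_continuousOn hcont
  refine ⟨B, fun s hs => ?_⟩
  simpa only [sub_zero] using
    hx.abs_ratio_sub_le_of_window hτ hc le_rfl (m := 0) (fun u hu => by simpa using hB u hu) s hs

theorem IsSolution.hasDerivAt_ratio (hx : IsSolution c r t₀ τ x)
    (hτ : ∀ t, t₀ < t → τ t ∈ Icc 0 r) (hc : 0 < t₀ - r + c) {t : ℝ} (ht : t₀ < t) :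
    HasDerivAt (ratio c x) ((ratio c x (t - τ t) - ratio c x t) / (t + c)) t := by
  have htc : t + c ≠ 0 := (add_pos_of_ge hc (by linarith [(hτ t ht).1, (hτ t ht).2])).ne'
  have hdc : t - τ t + c ≠ 0 := (delay_add_pos hτ hc ht).ne'
  refine ((hx.hasDerivAt t ht).div ((hasDerivAt_id' t).add_const c) htc).congr_deriv ?_
  rw [ratio, ratio, show t + c - τ t = t - τ t + c by ring]
  field_simp

theorem abs_ratio_delay_sub_div_le (hτ : ∀ t, t₀ < t → τ t ∈ Icc 0 r) (hc : 0 < t₀ - r + c)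
    {B : ℝ} (hB : ∀ s, t₀ - r ≤ s → |ratio c x s| ≤ B) {t : ℝ} (ht : t₀ < t) :
    |(ratio c x (t - τ t) - ratio c x t) / (t + c)| ≤ 2 * B / (t + c) := by
  have hτt := hτ t ht
  have htc : 0 < t + c := add_pos_of_ge hc (by linarith [hτt.1, hτt.2])
  rw [abs_div, abs_of_pos htc]
  gcongr
  calc |ratio c x (t - τ t) - ratio c x t| ≤ |ratio c x (t - τ t)| + |ratio c x t| := abs_sub _ _
    _ ≤ B + B := add_le_add (hB _ (by linarith [hτt.2])) (hB _ (by linarith [hτt.1, hτt.2]))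
    _ = 2 * B := by ring

theorem IsSolution.abs_ratio_sub_le (hx : IsSolution c r t₀ τ x)
    (hτ : ∀ t, t₀ < t → τ t ∈ Icc 0 r) (hc : 0 < t₀ - r + c)
    {B : ℝ} (hB : ∀ s, t₀ - r ≤ s → |ratio c x s| ≤ B) {b : ℝ} (hb : t₀ < b) :
    ∀ s, b ≤ s → |ratio c x s - ratio c x b| ≤ 2 * B * r / (b + c) := by
  have hτb := hτ b hb
  have hbc : 0 < b + c := add_pos_of_ge hc (by linarith [hτb.1, hτb.2])
  have hB0 : 0 ≤ B := (abs_nonneg _).trans (hB b (by linarith [hτb.1, hτb.2]))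
  refine hx.abs_ratio_sub_le_of_window hτ hc (by linarith [hτb.1, hτb.2]) fun u hu => ?_
  have hmvt := norm_image_sub_le_of_norm_deriv_le_segment' (C := 2 * B / (b + c))
    (fun v hv => (hx.hasDerivAt_ratio hτ hc (hb.trans_le hv.1)).hasDerivWithinAt)
    (fun v hv => (abs_ratio_delay_sub_div_le hτ hc hB (hb.trans_le hv.1)).trans
      (by gcongr; linarith [hv.1])) u hu
  calc |ratio c x u - ratio c x b| ≤ 2 * B / (b + c) * (u - b) := hmvt
    _ ≤ 2 * B / (b + c) * r := by gcongr; linarith [hu.2]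
    _ = 2 * B * r / (b + c) := by ring

end DelayEquation

open DelayEquation in
theorem stmt11_general
    (c r t₀ : ℝ) (hc : 0 < t₀ - r + c)
    (τ : ℝ → ℝ)
    (hτr : ∀ t, t₀ ≤ t → τ t ∈ Set.Icc 0 r)
    (x : ℝ → ℝ)
    (hxc : ContinuousOn x (Set.Ici (t₀ - r)))
    (hx : ∀ t, t₀ ≤ t →
      HasDerivWithinAt x (x (t - τ t) / (t + c - τ t)) (Set.Ici t₀) t) :
    (∃ L : ℝ, Tendsto (fun t => x t / (t + c)) atTop (𝓝 L)) ∧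
    (∃ y' : ℝ → ℝ,
      (∀ t, t₀ < t → HasDerivAt (fun u => x u / (u + c)) (y' t) t) ∧
      Tendsto y' atTop (𝓝 0)) := by
  have hτ : ∀ t, t₀ < t → τ t ∈ Icc 0 r := fun t ht => hτr t ht.le
  have hsol : IsSolution c r t₀ τ x :=
    ⟨hxc, fun t ht => (hx t ht.le).hasDerivAt (Ici_mem_nhds ht)⟩
  obtain ⟨B, hB⟩ := hsol.exists_bound hτ hc
  have hinv : ∀ K : ℝ, Tendsto (fun t => K / (t + c)) atTop (𝓝 0) := fun K =>
    tendsto_const_nhds.div_atTop (tendsto_atTop_add_const_right _ c tendsto_id)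
  refine ⟨exists_tendsto_of_eventually_dist_le (hinv (2 * B * r)) ?_,
    fun t => (ratio c x (t - τ t) - ratio c x t) / (t + c),
    fun t ht => hsol.hasDerivAt_ratio hτ hc ht, ?_⟩
  · filter_upwards [eventually_gt_atTop t₀] with b hb
    exact hsol.abs_ratio_sub_le hτ hc hB hb
  · refine squeeze_zero_norm' ?_ (hinv (2 * B))
    filter_upwards [eventually_gt_atTop t₀] with t ht
    exact abs_ratio_delay_sub_div_le hτ hc hB ht

theorem stmt11
    (c r t₀ : ℝ) (hr : 0 < r) (hc : 0 < t₀ - r + c)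
    (τ : ℝ → ℝ)
    (hτc : ContinuousOn τ (Set.Ici t₀))
    (hτr : ∀ t, t₀ ≤ t → τ t ∈ Set.Icc 0 r)
    (hpos : ∀ t, t₀ ≤ t → 0 < t + c - τ t)
    (x : ℝ → ℝ)
    (hxc : ContinuousOn x (Set.Ici (t₀ - r)))
    (hx : ∀ t, t₀ ≤ t →
      HasDerivWithinAt x (x (t - τ t) / (t + c - τ t)) (Set.Ici t₀) t) :
    (∃ L : ℝ, Tendsto (fun t => x t / (t + c)) atTop (𝓝 L)) ∧
    (∃ y' : ℝ → ℝ,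
      (∀ t, t₀ < t → HasDerivAt (fun u => x u / (u + c)) (y' t) t) ∧
      Tendsto y' atTop (𝓝 0)) :=
  stmt11_general c r t₀ hc τ hτr x hxc hx
end

section
/- Let c ∈ ℝ, r > 0 and t₀ ∈ ℝ with t₀ − r + c > 0, and let τ : [t₀, ∞) → [0, r] be a continuous function such that t + c − τ(t) > 0 for all t ≥ t₀. Then every solution x of x'(t) = x(t−τ(t))/(t + c − τ(t)) satisfies x(t) = O(t) and x'(t) = o(t) as t → ∞. -/
open Filter Topology Set

/-! Choose `K` with `|x s| < K (s + c)` on the initial interval `[t₀ - r, t₀]`. This linear bound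
propagates: at the first time `T` where it fails, every delayed argument `t - τ t` with `t < T`
lies where it still holds, so the equation gives `|x'| ≤ K` on `[t₀, T)`, and the mean value
inequality then yields `|x T| < K (T + c)`. Once `|x t| ≤ K (t + c)` for all `t`, the equation
bounds `|x'|` by `K`. -/

theorem exists_first_crossing {f g : ℝ → ℝ} {a t : ℝ} (hf : ContinuousOn f (Icc a t))
    (hg : ContinuousOn g (Icc a t)) (hat : a ≤ t) (hgf : g t ≤ f t) :
    ∃ T ∈ Icc a t, g T ≤ f T ∧ ∀ u ∈ Ico a T, f u < g u := by
  set S := {u ∈ Icc a t | g u ≤ f u}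
  have hS : IsCompact S :=
    isCompact_Icc.of_isClosed_subset (isClosed_Icc.isClosed_le hg hf) (sep_subset _ _)
  obtain ⟨T, ⟨hT, hgfT⟩, hleast⟩ := hS.exists_isLeast ⟨t, ⟨right_mem_Icc.2 hat, hgf⟩⟩
  refine ⟨T, hT, hgfT, fun u hu => lt_of_not_ge fun hgfu => ?_⟩
  exact (hleast ⟨⟨hu.1, hu.2.le.trans hT.2⟩, hgfu⟩).not_gt hu.2

theorem abs_le_of_mul_eq_of_abs_le_mul {y z p K : ℝ} (hp : 0 < p) (heq : y * p = z)
    (hz : |z| ≤ K * p) : |y| ≤ K := by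
  rw [← heq, abs_mul, abs_of_pos hp] at hz
  exact le_of_mul_le_mul_right hz hp

theorem abs_le_mul_add_of_delayed {x x' σ : ℝ → ℝ} {a c t₀ K : ℝ} (hac : 0 < a + c)
    (hxc : ContinuousOn x (Ici a))
    (hx : ∀ t, t₀ ≤ t → HasDerivWithinAt x (x' t) (Ici t₀) t)
    (hσ : ∀ t, t₀ ≤ t → σ t ∈ Icc a t) (heq : ∀ t, t₀ ≤ t → x' t * (σ t + c) = x (σ t))
    (hbase : ∀ s ∈ Icc a t₀, |x s| < K * (s + c)) :
    ∀ t, a ≤ t → |x t| ≤ K * (t + c) := by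
  have hat₀ : a ≤ t₀ := (hσ t₀ le_rfl).1.trans (hσ t₀ le_rfl).2
  intro t hat
  by_contra! hbad
  obtain ⟨T, hT, hcross, hbelow⟩ := exists_first_crossing (hxc.mono Icc_subset_Ici_self).abs
    (by fun_prop : ContinuousOn (fun u => K * (u + c)) (Icc a t)) hat hbad.le
  have ht₀T : t₀ ≤ T := le_of_not_ge fun hTt₀ => (hbase T ⟨hT.1, hTt₀⟩).not_ge hcross
  have hderiv : ∀ s ∈ Ico t₀ T, ‖x' s‖ ≤ K := fun s hs =>
    abs_le_of_mul_eq_of_abs_le_mul (by linarith [(hσ s hs.1).1]) (heq s hs.1)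
      (hbelow _ ⟨(hσ s hs.1).1, (hσ s hs.1).2.trans_lt hs.2⟩).le
  have hmvt := norm_image_sub_le_of_norm_deriv_le_segment'
    (fun s hs => (hx s hs.1).mono Icc_subset_Ici_self) hderiv T ⟨ht₀T, le_rfl⟩
  have ht₀ := hbase t₀ ⟨hat₀, le_rfl⟩
  rw [Real.norm_eq_abs] at hmvt
  linarith [abs_sub_abs_le_abs_sub (x T) (x t₀)]

theorem exists_abs_lt_mul_add {x : ℝ → ℝ} {a b c : ℝ} (hac : 0 < a + c)
    (hx : ContinuousOn x (Icc a b)) : ∃ K, ∀ s ∈ Icc a b, |x s| < K * (s + c) := by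
  obtain ⟨M, hM⟩ := isCompact_Icc.exists_bound_of_continuousOn hx
  refine ⟨(|M| + 1) / (a + c), fun s hs => ?_⟩
  have hKa : (|M| + 1) / (a + c) * (a + c) = |M| + 1 := div_mul_cancel₀ _ hac.ne'
  have hKs : (|M| + 1) / (a + c) * (a + c) ≤ (|M| + 1) / (a + c) * (s + c) :=
    mul_le_mul_of_nonneg_left (by linarith [hs.1]) (by positivity)
  linarith [hM s hs, le_abs_self M, Real.norm_eq_abs (x s)]

theorem exists_abs_le_mul_of_abs_le_mul_add {x : ℝ → ℝ} {a c K : ℝ}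
    (hx : ∀ t, a ≤ t → |x t| ≤ K * (t + c)) : ∃ C : ℝ, ∀ᶠ t in atTop, |x t| ≤ C * t := by
  refine ⟨K + |K * c|, ?_⟩
  filter_upwards [eventually_ge_atTop a, eventually_ge_atTop 1] with t hat ht
  nlinarith [hx t hat, le_abs_self (K * c), abs_nonneg (K * c)]

theorem tendsto_div_id_of_abs_le {f : ℝ → ℝ} {t₀ K : ℝ} (hf : ∀ t, t₀ ≤ t → |f t| ≤ K) :
    Tendsto (fun t => f t / t) atTop (𝓝 0) := by
  have hO : f =O[atTop] fun _ => (1 : ℝ) :=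
    Asymptotics.IsBigO.of_bound K (by
      filter_upwards [eventually_ge_atTop t₀] with t ht
      simpa using hf t ht)
  exact (hO.trans_isLittleO (Asymptotics.isLittleO_const_id_atTop 1)).tendsto_div_nhds_zero

theorem stmt12_general
    (c r t₀ : ℝ) (hc : 0 < t₀ - r + c)
    (τ : ℝ → ℝ)
    (hτr : ∀ t, t₀ ≤ t → τ t ∈ Set.Icc 0 r)
    (x x' : ℝ → ℝ)
    (hxc : ContinuousOn x (Set.Ici (t₀ - r)))
    (hx : ∀ t, t₀ ≤ t → HasDerivWithinAt x (x' t) (Set.Ici t₀) t)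
    (hxeq : ∀ t, t₀ ≤ t → x' t = x (t - τ t) / (t + c - τ t)) :
    (∃ C : ℝ, ∀ᶠ t in atTop, |x t| ≤ C * t) ∧
    Tendsto (fun t => x' t / t) atTop (𝓝 0) := by
  have hσ : ∀ t, t₀ ≤ t → t - τ t ∈ Icc (t₀ - r) t := fun t ht => by
    obtain ⟨hτ0, hτr⟩ := hτr t ht
    constructor <;> linarith
  have heq : ∀ t, t₀ ≤ t → x' t * (t - τ t + c) = x (t - τ t) := fun t ht => by
    rw [hxeq t ht, sub_add_eq_add_sub, div_mul_cancel₀]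
    linarith [(hσ t ht).1]
  obtain ⟨K, hbase⟩ := exists_abs_lt_mul_add (b := t₀) hc (hxc.mono Icc_subset_Ici_self)
  have hgrowth := abs_le_mul_add_of_delayed hc hxc hx hσ heq hbase
  have hderiv : ∀ t, t₀ ≤ t → |x' t| ≤ K := fun t ht =>
    abs_le_of_mul_eq_of_abs_le_mul (by linarith [(hσ t ht).1]) (heq t ht) (hgrowth _ (hσ t ht).1)
  exact ⟨exists_abs_le_mul_of_abs_le_mul_add hgrowth, tendsto_div_id_of_abs_le hderiv⟩

theorem stmt12
    (c r t₀ : ℝ) (hr : 0 < r) (hc : 0 < t₀ - r + c)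
    (τ : ℝ → ℝ)
    (hτc : ContinuousOn τ (Set.Ici t₀))
    (hτr : ∀ t, t₀ ≤ t → τ t ∈ Set.Icc 0 r)
    (hpos : ∀ t, t₀ ≤ t → 0 < t + c - τ t)
    (x x' : ℝ → ℝ)
    (hxc : ContinuousOn x (Set.Ici (t₀ - r)))
    (hx : ∀ t, t₀ ≤ t → HasDerivWithinAt x (x' t) (Set.Ici t₀) t)
    (hxeq : ∀ t, t₀ ≤ t → x' t = x (t - τ t) / (t + c - τ t)) :
    (∃ C : ℝ, ∀ᶠ t in atTop, |x t| ≤ C * t) ∧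
    Tendsto (fun t => x' t / t) atTop (𝓝 0) :=
  stmt12_general c r t₀ hc τ hτr x x' hxc hx hxeq
end

section
/- Let t₀ > 2 and let x : [t₀−1, ∞) → ℝ be a continuous function, differentiable on [t₀, ∞) (with right derivative at t₀), satisfying x'(t) = ∫_0^1 x(t−θ)/(t−θ) dθ for all t ≥ t₀. Then the limit lim_{t→∞} x(t)/t exists, the derivative of t ↦ x(t)/t tends to 0 as t → ∞, and lim_{t→∞} x'(t)/t = 0. -/
/-!
With `y(t) = x(t)/t` the equation becomes `y'(t) = (1/t) ∫_{t-1}^t (y(s) - y(t)) ds`. By the mean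
value theorem `|y(s) - y(t)| ≤ (t - s) max_{[t-1,t]} |y'|`, so `|y'(t)| ≤ ½ max_{[t-1,t]} |y'|`
once `t ≥ 1`. Hence the maxima of `|y'|` over consecutive unit intervals decay geometrically:
`y'` is integrable on `[t₀, ∞)` and tends to `0`, so `y` converges, and `x'/t = y' + y/t → 0`.
-/

open Filter Topology MeasureTheory Set

section GeometricDecay

variable {f : ℝ → ℝ} {a q C : ℝ}

theorem exists_abs_le_mul_pow_floor_of_contraction (hf : ContinuousOn f (Ici a))
    (hq₀ : 0 ≤ q) (hq₁ : q < 1)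
    (hcontr : ∀ t, a + 1 ≤ t → ∀ K, (∀ u ∈ Icc (t - 1) t, |f u| ≤ K) → |f t| ≤ q * K) :
    ∃ C, ∀ t, a ≤ t → |f t| ≤ C * q ^ ⌊t - a⌋₊ := by
  have hmax (n : ℕ) : ∃ z ∈ Icc (a + n) (a + n + 1),
      ∀ u ∈ Icc (a + n) (a + n + 1), |f u| ≤ |f z| :=
    isCompact_Icc.exists_isMaxOn (nonempty_Icc.2 (by linarith))
      (hf.mono fun u hu => by simp only [mem_Ici]; linarith [hu.1, n.cast_nonneg (α := ℝ)]).abs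
  choose z hz hzmax using hmax
  have hstep (n : ℕ) : |f (z (n + 1))| ≤ q * |f (z n)| := by
    obtain ⟨hz₁, hz₂⟩ := hz (n + 1)
    push_cast at hz₁ hz₂
    have h := hcontr (z (n + 1)) (by linarith [n.cast_nonneg (α := ℝ)])
      (max |f (z n)| |f (z (n + 1))|) fun u hu => by
        rcases le_total u (a + n + 1) with hun | hun
        · exact (hzmax n u ⟨by linarith [hu.1], hun⟩).trans (le_max_left _ _)
        · exact (hzmax (n + 1) u ⟨by push_cast; linarith, by push_cast; linarith [hu.2]⟩).trans
            (le_max_right _ _)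
    rcases max_cases |f (z n)| |f (z (n + 1))| with ⟨hK, _⟩ | ⟨hK, _⟩ <;> rw [hK] at h
    · exact h
    · nlinarith [abs_nonneg (f (z n)), abs_nonneg (f (z (n + 1)))]
  have hgeom (n : ℕ) : |f (z n)| ≤ |f (z 0)| * q ^ n := by
    induction n with
    | zero => simp
    | succ n ih =>
      calc |f (z (n + 1))| ≤ q * |f (z n)| := hstep n
        _ ≤ q * (|f (z 0)| * q ^ n) := by gcongr
        _ = |f (z 0)| * q ^ (n + 1) := by ring
  refine ⟨|f (z 0)|, fun t ht => (hzmax _ t ⟨?_, ?_⟩).trans (hgeom _)⟩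
  · linarith [Nat.floor_le (sub_nonneg.2 ht)]
  · linarith [Nat.lt_floor_add_one (t - a)]

theorem tendsto_zero_of_abs_le_mul_pow_floor (hq₀ : 0 ≤ q) (hq₁ : q < 1)
    (hbound : ∀ t, a ≤ t → |f t| ≤ C * q ^ ⌊t - a⌋₊) :
    Tendsto f atTop (𝓝 0) := by
  have hfloor : Tendsto (fun t : ℝ => ⌊t - a⌋₊) atTop atTop :=
    tendsto_nat_floor_atTop.comp (tendsto_atTop_add_const_right _ (-a) tendsto_id)
  refine squeeze_zero_norm' ?_ (by simpa using
    ((tendsto_pow_atTop_nhds_zero_of_lt_one hq₀ hq₁).comp hfloor).const_mul C)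
  filter_upwards [eventually_ge_atTop a] with t ht using hbound t ht

theorem integrableOn_Ioi_of_abs_le_mul_pow_floor (hf : ContinuousOn f (Ioi a))
    (hq₀ : 0 < q) (hq₁ : q < 1) (hbound : ∀ t, a ≤ t → |f t| ≤ C * q ^ ⌊t - a⌋₊) :
    IntegrableOn f (Ioi a) := by
  have hlog : Real.log q < 0 := Real.log_neg hq₀ hq₁
  have hexp (t : ℝ) (ht : a ≤ t) :
      |f t| ≤ C * Real.exp (-(a + 1) * Real.log q) * Real.exp (-(-Real.log q) * t) := by
    have hn : t - a - 1 ≤ ⌊t - a⌋₊ := by linarith [Nat.lt_floor_add_one (t - a)]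
    have hC : 0 ≤ C := by
      have := (abs_nonneg _).trans (hbound t ht)
      exact nonneg_of_mul_nonneg_left this (pow_pos hq₀ _)
    calc |f t| ≤ C * q ^ ⌊t - a⌋₊ := hbound t ht
      _ = C * Real.exp (⌊t - a⌋₊ * Real.log q) := by rw [Real.exp_nat_mul, Real.exp_log hq₀]
      _ ≤ C * Real.exp ((t - a - 1) * Real.log q) := by
        gcongr C * Real.exp ?_
        exact mul_le_mul_of_nonpos_right hn hlog.le
      _ = _ := by rw [mul_assoc, ← Real.exp_add]; ring_nf
  refine ((exp_neg_integrableOn_Ioi a (neg_pos.2 hlog)).const_mul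
    (C * Real.exp (-(a + 1) * Real.log q))).mono'
    (hf.aestronglyMeasurable measurableSet_Ioi) ?_
  filter_upwards [self_mem_ae_restrict measurableSet_Ioi] with t ht
  exact (Real.norm_eq_abs (f t)).symm ▸ hexp t (le_of_lt ht)

end GeometricDecay

section DelayEquation

/-- For `y = x / t`, the equation `x'(t) = ∫_0^1 x(t-θ)/(t-θ) dθ` reads
`y'(t) = delayRhs y t`. -/
noncomputable def delayRhs (y : ℝ → ℝ) (t : ℝ) : ℝ := ((∫ s in (t - 1)..t, y s) - y t) / t

variable {y y' : ℝ → ℝ} {a t K : ℝ}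

theorem abs_integral_sub_one_sub_le
    (hderiv : ∀ u ∈ Icc (t - 1) t, HasDerivWithinAt y (y' u) (Icc (t - 1) t) u)
    (hbound : ∀ u ∈ Icc (t - 1) t, |y' u| ≤ K) :
    |(∫ s in (t - 1)..t, y s) - y t| ≤ K / 2 := by
  have hmem : t ∈ Icc (t - 1) t := ⟨by linarith, le_rfl⟩
  have hcont : ContinuousOn y (Icc (t - 1) t) := fun u hu => (hderiv u hu).continuousWithinAt
  have hint : IntervalIntegrable y volume (t - 1) t :=
    hcont.intervalIntegrable_of_Icc (by linarith)
  have hlip (s) (hs : s ∈ Icc (t - 1) t) : |y s - y t| ≤ K * (t - s) := by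
    have := Convex.norm_image_sub_le_of_norm_hasDerivWithin_le hderiv hbound
      (convex_Icc _ _) hmem hs
    rwa [Real.norm_eq_abs, Real.norm_eq_abs, abs_sub_comm s t, abs_of_nonneg (sub_nonneg.2 hs.2)]
      at this
  have hshift : (∫ s in (t - 1)..t, y s) - y t = ∫ s in (t - 1)..t, (y s - y t) := by
    simp [intervalIntegral.integral_sub hint intervalIntegrable_const]
  have hmass : ∫ s in (t - 1)..t, K * (t - s) = K / 2 := by
    rw [intervalIntegral.integral_comp_sub_left (fun s => K * s), sub_self, sub_sub_cancel,
      intervalIntegral.integral_const_mul, integral_id]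
    ring
  rw [hshift, ← hmass]
  refine intervalIntegral.norm_integral_le_of_norm_le (f := fun s => y s - y t)
    (g := fun s => K * (t - s)) (by linarith)
    (Eventually.of_forall fun s hs => hlip s (Ioc_subset_Icc_self hs)) ?_
  exact (continuous_const.mul (continuous_const.sub continuous_id)).intervalIntegrable _ _

theorem abs_delayRhs_le
    (ht : 1 ≤ t)
    (hderiv : ∀ u ∈ Icc (t - 1) t, HasDerivWithinAt y (delayRhs y u) (Icc (t - 1) t) u)
    (hbound : ∀ u ∈ Icc (t - 1) t, |delayRhs y u| ≤ K) :
    |delayRhs y t| ≤ 1 / 2 * K := by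
  have hK : 0 ≤ K := (abs_nonneg _).trans (hbound t ⟨by linarith, le_rfl⟩)
  rw [delayRhs, abs_div, abs_of_pos (show 0 < t by linarith), div_le_iff₀ (by linarith)]
  nlinarith [abs_integral_sub_one_sub_le hderiv hbound]

theorem continuous_integral_sub_one (hy : Continuous y) :
    Continuous fun t => ∫ s in (t - 1)..t, y s := by
  have hprim := intervalIntegral.continuous_primitive (μ := volume)
    (fun a b => hy.intervalIntegrable a b) 0
  refine (hprim.sub (hprim.comp (continuous_sub_right 1))).congr fun t => ?_
  exact intervalIntegral.integral_interval_sub_left (hy.intervalIntegrable _ _)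
    (hy.intervalIntegrable _ _)

theorem integrableOn_delayRhs_and_tendsto (ha : 0 < a) (hy : Continuous y)
    (hderiv : ∀ t, a ≤ t → HasDerivWithinAt y (delayRhs y t) (Ici a) t) :
    IntegrableOn (delayRhs y) (Ioi a) ∧ Tendsto (delayRhs y) atTop (𝓝 0) := by
  have hcont : ContinuousOn (delayRhs y) (Ici a) :=
    ((continuous_integral_sub_one hy).sub hy).continuousOn.div continuousOn_id
      fun t ht => (ha.trans_le ht).ne'
  obtain ⟨C, hC⟩ := exists_abs_le_mul_pow_floor_of_contraction hcont (by norm_num) (by norm_num)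
    fun t ht K hK => abs_delayRhs_le (by linarith)
      (fun u hu => (hderiv u (by linarith [hu.1])).mono fun v hv => by
        simp only [mem_Ici]; linarith [hv.1]) hK
  exact ⟨integrableOn_Ioi_of_abs_le_mul_pow_floor (hcont.mono Ioi_subset_Ici_self)
    (by norm_num) (by norm_num) hC, tendsto_zero_of_abs_le_mul_pow_floor (by norm_num)
    (by norm_num) hC⟩

end DelayEquation

theorem HasDerivWithinAt.div_id {x : ℝ → ℝ} {x' t : ℝ} {s : Set ℝ}
    (hx : HasDerivWithinAt x x' s t) (ht : t ≠ 0) :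
    HasDerivWithinAt (fun u => x u / u) ((x' - x t / t) / t) s t := by
  refine (hx.div (hasDerivWithinAt_id t s) ht).congr_deriv ?_
  simp only [id_eq]
  field_simp

theorem stmt15
    (t₀ : ℝ) (ht₀ : 2 < t₀)
    (x x' : ℝ → ℝ)
    (hxc : ContinuousOn x (Set.Ici (t₀ - 1)))
    (hx : ∀ t, t₀ ≤ t → HasDerivWithinAt x (x' t) (Set.Ici t₀) t)
    (hxeq : ∀ t, t₀ ≤ t → x' t = ∫ θ in (0:ℝ)..1, x (t - θ) / (t - θ)) :
    (∃ L : ℝ, Tendsto (fun t => x t / t) atTop (𝓝 L)) ∧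
    (∃ y' : ℝ → ℝ,
      (∀ t, t₀ < t → HasDerivAt (fun u => x u / u) (y' t) t) ∧
      Tendsto y' atTop (𝓝 0)) ∧
    Tendsto (fun t => x' t / t) atTop (𝓝 0) := by
  have hpos (t : ℝ) (ht : t₀ - 1 ≤ t) : 0 < t := by linarith
  set y : ℝ → ℝ := fun s => x (max s (t₀ - 1)) / max s (t₀ - 1)
  have hy_eq : EqOn y (fun u => x u / u) (Ici (t₀ - 1)) := fun s hs => by
    simp only [y, max_eq_left (mem_Ici.1 hs)]
  have hmax : Continuous fun s : ℝ => max s (t₀ - 1) := continuous_id.max continuous_const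
  have hy : Continuous y :=
    (hxc.comp_continuous hmax fun s => mem_Ici.2 (le_max_right _ _)).div hmax
      fun s => (hpos _ (le_max_right _ _)).ne'
  have hx' (t : ℝ) (ht : t₀ ≤ t) : x' t = ∫ s in (t - 1)..t, y s := by
    have hsub := intervalIntegral.integral_comp_sub_left (a := 0) (b := 1) y t
    rw [sub_zero] at hsub
    rw [hxeq t ht, ← hsub]
    refine intervalIntegral.integral_congr fun θ hθ => (hy_eq ?_).symm
    rw [uIcc_of_le zero_le_one] at hθ
    exact mem_Ici.2 (by linarith [hθ.2])
  have hderiv (t : ℝ) (ht : t₀ ≤ t) :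
      HasDerivWithinAt (fun u => x u / u) (delayRhs y t) (Ici t₀) t := by
    convert (hx t ht).div_id (hpos t (by linarith)).ne' using 1
    rw [delayRhs, hx' t ht, hy_eq (mem_Ici.2 (by linarith))]
  obtain ⟨hint, hlim⟩ := integrableOn_delayRhs_and_tendsto (by linarith) hy fun t ht =>
    (hderiv t ht).congr (hy_eq.mono (Ici_subset_Ici.2 (by linarith)))
      (hy_eq (mem_Ici.2 (by linarith)))
  have hderivAt (t : ℝ) (ht : t₀ < t) : HasDerivAt (fun u => x u / u) (delayRhs y t) t :=
    (hderiv t ht.le).hasDerivAt (Ici_mem_nhds ht)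
  have hL := tendsto_limUnder_of_hasDerivAt_of_integrableOn_Ioi hderivAt hint
  refine ⟨⟨_, hL⟩, ⟨_, hderivAt, hlim⟩, ?_⟩
  simpa using (hlim.add (hL.div_atTop tendsto_id)).congr' <| by
    filter_upwards [eventually_ge_atTop t₀] with t ht
    have ht' : t ≠ 0 := (hpos t (by linarith)).ne'
    rw [delayRhs, ← hx' t ht, hy_eq (mem_Ici.2 (by linarith))]
    simp only [id_eq]
    field_simp
    ring
end
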